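/- Let (Y₀, Y₁) be an independent pair of observations, and for each K define the finite-sample expected score classifier f_Y(y;K) = (1/K)Σ_{i=1}^K f_X(g(y, Z_i)) with i.i.d. seeds. Assume that almost surely over (Y₀,Y₁) the quantity μ(Y₀,Y₁) := E_Z[f_X(g(Y₁,Z))] − E_Z[f_X(g(Y₀,Z))] is nonzero and has the same sign as π(C=1|Y₁) − π(C=1|Y₀). Then lim_{K→∞} P(f_Y(Y₀;K) ≤ f_Y(Y₁;K)) = P(π(C=1|Y₁) ≥ π(C=1|Y₀)). -/

import Mathlib

open MeasureTheory ProbabilityTheory Filter Topology Finset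

/-!
Conditionally on `(Y₀, Y₁) = (y₀, y₁)` the seeds are still i.i.d., so by the strong law the two
empirical scores converge almost surely to `E_Z[fX (g y₀ Z)]` and `E_Z[fX (g y₁ Z)]`; independence
and Fubini turn this into almost sure convergence at the random pair `(Y₀, Y₁)`. Where the limits
differ, the event `f_Y(Y₀;K) ≤ f_Y(Y₁;K)` eventually coincides with the order of the limits,
which by the sign condition is the event `q Y₀ ≤ q Y₁`; dominated convergence for indicators
concludes.
-/

section

variable {Ω α β : Type*} [MeasurableSpace Ω] [MeasurableSpace α] [MeasurableSpace β]
  {μ : Measure Ω}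

theorem ProbabilityTheory.IndepFun.ae_mem_of_forall_ae_mem [IsFiniteMeasure μ]
    {X : Ω → α} {S : Ω → β} (hX : Measurable X) (hS : Measurable S) (hXS : IndepFun X S μ)
    {P : Set (α × β)} (hP : MeasurableSet P) (h : ∀ x, ∀ᵐ ω ∂μ, (x, S ω) ∈ P) :
    ∀ᵐ ω ∂μ, (X ω, S ω) ∈ P := by
  have hmap := (indepFun_iff_map_prod_eq_prod_map_map hX.aemeasurable hS.aemeasurable).1 hXS
  have hprod : ∀ᵐ p ∂(μ.map X).prod (μ.map S), p ∈ P :=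
    (Measure.ae_prod_mem_iff_ae_ae_mem hP).2 <| ae_of_all _ fun x =>
      (ae_map_iff hS.aemeasurable (measurable_prodMk_left hP)).2 (h x)
  rw [← hmap] at hprod
  exact ae_of_ae_map (hX.prodMk hS).aemeasurable hprod

variable {W : ℕ → Ω → β} {ν : Measure β}

theorem strong_law_ae_comp (hW : ∀ i, Measurable (W i)) (hlaw : ∀ i, μ.map (W i) = ν)
    (hindep : iIndepFun W μ) {h : β → ℝ} (hh : Measurable h) (hint : Integrable h ν) :
    ∀ᵐ ω ∂μ, Tendsto (fun K : ℕ => (∑ i ∈ range K, h (W i ω)) / K) atTop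
      (𝓝 (∫ b, h b ∂ν)) := by
  have hident : ∀ i, IdentDistrib (W i) (W 0) μ μ := fun i =>
    ⟨(hW i).aemeasurable, (hW 0).aemeasurable, by rw [hlaw, hlaw]⟩
  have hmean : ∫ ω, h (W 0 ω) ∂μ = ∫ b, h b ∂ν := by
    rw [← integral_map (hW 0).aemeasurable hh.aestronglyMeasurable, hlaw]
  have hint₀ : Integrable (h ∘ W 0) μ := (hlaw 0 ▸ hint).comp_measurable (hW 0)
  rw [← hmean]
  exact strong_law_ae_real (fun i => h ∘ W i) hint₀
    (fun i j hij => (hindep.comp (fun _ => h) fun _ => hh).indepFun hij)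
    (fun i => (hident i).comp hh)

theorem measurable_average {F : α → β → ℝ} (hF : Measurable (Function.uncurry F)) {Y : Ω → α}
    (hY : Measurable Y) (hW : ∀ i, Measurable (W i)) (K : ℕ) :
    Measurable fun ω => (∑ i ∈ range K, F (Y ω) (W i ω)) / K :=
  (Finset.measurable_sum _ fun i _ => hF.comp (hY.prodMk (hW i))).div_const _

theorem ae_tendsto_average_of_indepFun [IsProbabilityMeasure μ] {Y : Ω → α} (hY : Measurable Y)
    (hW : ∀ i, Measurable (W i)) (hlaw : ∀ i, μ.map (W i) = ν) (hindep : iIndepFun W μ)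
    (hYW : IndepFun Y (fun ω i => W i ω) μ) {F : α → β → ℝ} (hF : Measurable (Function.uncurry F))
    (hFint : ∀ a, Integrable (F a) ν) :
    ∀ᵐ ω ∂μ, Tendsto (fun K : ℕ => (∑ i ∈ range K, F (Y ω) (W i ω)) / K) atTop
      (𝓝 (∫ b, F (Y ω) b ∂ν)) := by
  have : IsProbabilityMeasure ν := hlaw 0 ▸ Measure.isProbabilityMeasure_map (hW 0).aemeasurable
  have hsum := measurable_average (W := fun i (p : α × (ℕ → β)) => p.2 i) hF measurable_fst
    fun i => (measurable_pi_apply i).comp measurable_snd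
  have hlim : Measurable fun p : α × (ℕ → β) => ∫ b, F p.1 b ∂ν :=
    (hF.comp (measurable_fst.fst.prodMk measurable_snd)).stronglyMeasurable
      |>.integral_prod_right' |>.measurable
  exact hYW.ae_mem_of_forall_ae_mem hY (measurable_pi_lambda _ hW)
    (measurableSet_tendsto_fun hsum hlim)
    fun a => strong_law_ae_comp hW hlaw hindep (hF.comp measurable_prodMk_left) (hFint a)

end

theorem Filter.Tendsto.eventually_le_iff {ι α : Type*} [TopologicalSpace α] [LinearOrder α]
    [OrderClosedTopology α] {l : Filter ι} {u v : ι → α} {a b : α} (hu : Tendsto u l (𝓝 a))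
    (hv : Tendsto v l (𝓝 b)) (hab : a ≠ b) : ∀ᶠ i in l, (u i ≤ v i ↔ a ≤ b) := by
  rcases hab.lt_or_gt with hlt | hgt
  · filter_upwards [hu.eventually_lt hv hlt] with i hi
    simp [hi.le, hlt.le]
  · filter_upwards [hv.eventually_lt hu hgt] with i hi
    simp [not_le.2 hi, not_le.2 hgt]

theorem le_iff_le_of_mul_sub_pos {α : Type*} [Ring α] [LinearOrder α] [IsStrictOrderedRing α]
    {a b c d : α} (h : 0 < (b - a) * (d - c)) : a ≤ b ↔ c ≤ d := by
  rcases pos_and_pos_or_neg_and_neg_of_mul_pos h with ⟨h₁, h₂⟩ | ⟨h₁, h₂⟩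
  · exact ⟨fun _ => (sub_pos.1 h₂).le, fun _ => (sub_pos.1 h₁).le⟩
  · exact ⟨fun h' => absurd h₁ (sub_nonneg.2 h').not_gt,
      fun h' => absurd h₂ (sub_nonneg.2 h').not_gt⟩
/-- asymptotic AUROC of the finite-sample expected score classifier.
If, almost surely over the independent pair `(Y₀, Y₁)`, the population expected-score gap
`E_Z[fX (g Y₁ Z)] − E_Z[fX (g Y₀ Z)]` is nonzero and has the same sign as
`π(C=1|Y₁) − π(C=1|Y₀)`, then
`P(f_Y(Y₀;K) ≤ f_Y(Y₁;K)) → P(π(C=1|Y₁) ≥ π(C=1|Y₀))` as `K → ∞`. -/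
theorem auroc_limit_of_expected_score_classifier
    {Ω 𝒳 𝒴 𝒵 : Type*} [MeasurableSpace Ω] [MeasurableSpace 𝒳] [MeasurableSpace 𝒴]
    [MeasurableSpace 𝒵]
    (μ : Measure Ω) [IsProbabilityMeasure μ]
    (Y₀ Y₁ : Ω → 𝒴) (hY₀ : Measurable Y₀) (hY₁ : Measurable Y₁)
    (Z Z' : ℕ → Ω → 𝒵) (hZ : ∀ i, Measurable (Z i)) (hZ' : ∀ i, Measurable (Z' i))
    (ζ : Measure 𝒵) [IsProbabilityMeasure ζ]
    -- the seed pairs `(Z i, Z' i)` are i.i.d., with `Z i, Z' i` independent, each of law `ζ`: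
    (hseed_law : ∀ i, μ.map (fun ω => (Z i ω, Z' i ω)) = ζ.prod ζ)
    (hseed_indep : iIndepFun (fun i ω => (Z i ω, Z' i ω)) μ)
    -- the seeds are independent of the pair `(Y₀, Y₁)`:
    (hindep : IndepFun (fun ω => (Y₀ ω, Y₁ ω)) (fun ω (i : ℕ) => (Z i ω, Z' i ω)) μ)
    (g : 𝒴 → 𝒵 → 𝒳) (hg : Measurable (Function.uncurry g))
    (fX : 𝒳 → ℝ) (hfX : Measurable fX) (hfX01 : ∀ x, fX x ∈ Set.Icc (0 : ℝ) 1)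
    (q : 𝒴 → ℝ) (hq : Measurable q)   -- `q y = π(C=1|Y=y)`
    -- a.s. the population expected-score gap is nonzero and of the same sign as `q Y₁ − q Y₀`:
    (hsign : ∀ᵐ ω ∂μ,
      ((∫ z, fX (g (Y₁ ω) z) ∂ζ) - ∫ z, fX (g (Y₀ ω) z) ∂ζ) ≠ 0 ∧
      0 < ((∫ z, fX (g (Y₁ ω) z) ∂ζ) - ∫ z, fX (g (Y₀ ω) z) ∂ζ) * (q (Y₁ ω) - q (Y₀ ω))) :
    Tendsto
      (fun K : ℕ => μ {ω |
        (∑ i ∈ Finset.range K, fX (g (Y₀ ω) (Z i ω))) / K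
          ≤ (∑ i ∈ Finset.range K, fX (g (Y₁ ω) (Z' i ω))) / K})
      atTop (nhds (μ {ω | q (Y₀ ω) ≤ q (Y₁ ω)})) := by
  have hF : Measurable (Function.uncurry fun y z => fX (g y z)) := hfX.comp hg
  have hFint : ∀ y, Integrable (fun z => fX (g y z)) ζ := fun y =>
    .of_bound (hF.comp measurable_prodMk_left).aestronglyMeasurable 1 <| ae_of_all _ fun z => by
      rw [Real.norm_of_nonneg (hfX01 _).1]
      exact (hfX01 _).2
  have hZlaw : ∀ i, μ.map (Z i) = ζ := fun i => by
    rw [← Measure.fst_map_prodMk (hZ' i), hseed_law, Measure.fst_prod]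
  have hZ'law : ∀ i, μ.map (Z' i) = ζ := fun i => by
    rw [← Measure.snd_map_prodMk (hZ i), hseed_law, Measure.snd_prod]
  have hY₀Z : IndepFun Y₀ (fun ω i => Z i ω) μ :=
    hindep.comp measurable_fst (measurable_pi_lambda (fun s i => (s i).1 : (ℕ → 𝒵 × 𝒵) → ℕ → 𝒵)
      fun i => (measurable_pi_apply i).fst)
  have hY₁Z' : IndepFun Y₁ (fun ω i => Z' i ω) μ :=
    hindep.comp measurable_snd (measurable_pi_lambda (fun s i => (s i).2 : (ℕ → 𝒵 × 𝒵) → ℕ → 𝒵)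
      fun i => (measurable_pi_apply i).snd)
  have hmean₀ := ae_tendsto_average_of_indepFun hY₀ hZ hZlaw
    (hseed_indep.comp (fun _ => Prod.fst) fun _ => measurable_fst) hY₀Z hF hFint
  have hmean₁ := ae_tendsto_average_of_indepFun hY₁ hZ' hZ'law
    (hseed_indep.comp (fun _ => Prod.snd) fun _ => measurable_snd) hY₁Z' hF hFint
  refine tendsto_measure_of_ae_tendsto_indicator_of_isFiniteMeasure atTop
    (measurableSet_le (hq.comp hY₀) (hq.comp hY₁))
    (fun K => measurableSet_le (measurable_average hF hY₀ hZ K) (measurable_average hF hY₁ hZ' K))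
    ?_
  filter_upwards [hmean₀, hmean₁, hsign] with ω h₀ h₁ ⟨hne, hpos⟩
  filter_upwards [h₀.eventually_le_iff h₁ (sub_ne_zero.1 hne).symm] with K hK
  exact hK.trans (le_iff_le_of_mul_sub_pos hpos)
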